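/- For each l = 1,…,d let μ_l be a measure on ℝ with all polynomial moments finite, (ψ^{(l)}_n)_{n≥0} an orthonormal polynomial family for μ_l, and Q^{(l)} a quadrature rule exact of degree a_l for μ_l; set q_l := ⌊a_l/2⌋. Define the full tensor pseudospectral approximation S(f) := Σ_{j : j_l ≤ q_l ∀l} (Q^{(1)} ⊗ ⋯ ⊗ Q^{(d)})(f Ψ_j) Ψ_j, where Ψ_j(x) = Π_l ψ^{(l)}_{j_l}(x_l). Then S has no internal aliasing: for every polynomial p in the span of {Ψ_j : j_l ≤ q_l for all l}, S(p) = p. -/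
import Mathlib


open MeasureTheory

/-- The multivariate basis polynomial `Ψ_j(x) = ∏ l, ψ^{(l)}_{j l}(x l)`. -/
noncomputable def multiPsi {d : ℕ} (ψ : Fin d → ℕ → Polynomial ℝ) (j : Fin d → ℕ) :
    (Fin d → ℝ) → ℝ :=
  fun y => ∏ l, (ψ l (j l)).eval (y l)

/-- The tensor quadrature `Q^{(1)} ⊗ ⋯ ⊗ Q^{(d)}` acting on a function `f : ℝ^d → ℝ`
by summing over the product node grid with product weights. -/
noncomputable def tensorQuad {d : ℕ} (N : Fin d → ℕ)
    (x w : ∀ l : Fin d, Fin (N l) → ℝ) (f : (Fin d → ℝ) → ℝ) : ℝ :=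
  ∑ i : ∀ l, Fin (N l), (∏ l, w l (i l)) * f (fun l => x l (i l))

/-- The full tensor pseudospectral approximation
`S(f) = ∑_{j : j l ≤ q l ∀ l} (Q^{(1)} ⊗ ⋯ ⊗ Q^{(d)})(f Ψ_j) Ψ_j`. -/
noncomputable def fullTensorPseudospectral {d : ℕ} (N : Fin d → ℕ)
    (x w : ∀ l : Fin d, Fin (N l) → ℝ) (ψ : Fin d → ℕ → Polynomial ℝ)
    (q : Fin d → ℕ) (f : (Fin d → ℝ) → ℝ) : (Fin d → ℝ) → ℝ :=
  fun y => ∑ j ∈ Fintype.piFinset (fun l => Finset.range (q l + 1)),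
    tensorQuad N x w (fun z => f z * multiPsi ψ j z) * multiPsi ψ j y

lemma tensorQuad_prod {d : ℕ} (N : Fin d → ℕ) (x w : ∀ l : Fin d, Fin (N l) → ℝ)
    (f : ∀ l : Fin d, ℝ → ℝ) :
    tensorQuad N x w (fun z => ∏ l, f l (z l)) = ∏ l, ∑ i, w l i * f l (x l i) := by
  unfold tensorQuad
  rw [Finset.prod_univ_sum]
  rw [← Fintype.piFinset_univ]
  exact Finset.sum_congr rfl fun i _ => (Finset.prod_mul_distrib).symm

lemma key {d : ℕ} (μ : Fin d → Measure ℝ)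
    (ψ : Fin d → ℕ → Polynomial ℝ)
    (hdeg : ∀ l m, (ψ l m).natDegree = m)
    (horth : ∀ l m m',
      ∫ t, (ψ l m).eval t * (ψ l m').eval t ∂(μ l) = if m = m' then 1 else 0)
    (N : Fin d → ℕ) (x w : ∀ l : Fin d, Fin (N l) → ℝ) (a : Fin d → ℕ)
    (hexact : ∀ l : Fin d, ∀ p : Polynomial ℝ, p.natDegree ≤ a l →
      ∑ i, w l i * p.eval (x l i) = ∫ t, p.eval t ∂(μ l))
    (j : Fin d → ℕ) (hj : ∀ l, j l ≤ a l / 2) :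
    fullTensorPseudospectral N x w ψ (fun l => a l / 2) (multiPsi ψ j) = multiPsi ψ j := by
  funext y
  unfold fullTensorPseudospectral
  have hquad : ∀ j' ∈ Fintype.piFinset (fun l => Finset.range (a l / 2 + 1)),
      tensorQuad N x w (fun z => multiPsi ψ j z * multiPsi ψ j' z)
        = ∏ l, (if j l = j' l then (1:ℝ) else 0) := by
    intro j' hj'
    have hj'le : ∀ l, j' l ≤ a l / 2 := by
      intro l
      have := Fintype.mem_piFinset.mp hj' l
      simpa [Nat.lt_succ_iff] using this
    have : (fun z : Fin d → ℝ => multiPsi ψ j z * multiPsi ψ j' z)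
        = fun z => ∏ l, ((ψ l (j l)) * (ψ l (j' l))).eval (z l) := by
      funext z
      simp [multiPsi, ← Finset.prod_mul_distrib, Polynomial.eval_mul]
    rw [this, tensorQuad_prod N x w (fun l t => ((ψ l (j l)) * (ψ l (j' l))).eval t)]
    refine Finset.prod_congr rfl fun l _ => ?_
    have hdegle : ((ψ l (j l)) * (ψ l (j' l))).natDegree ≤ a l := by
      refine le_trans (Polynomial.natDegree_mul_le) ?_
      rw [hdeg, hdeg]
      have h1 := hj l
      have h2 := hj'le l
      omega
    rw [hexact l _ hdegle]
    simp only [Polynomial.eval_mul]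
    exact horth l (j l) (j' l)
  rw [Finset.sum_congr rfl fun j' hj' => by rw [hquad j' (by simpa using hj')],
    Finset.sum_eq_single j]
  · simp
  · intro j' hj' hne
    have : ∃ l, j l ≠ j' l := by
      by_contra h
      push_neg at h
      exact hne (funext fun l => (h l).symm)
    obtain ⟨l, hl⟩ := this
    rw [Finset.prod_eq_zero (Finset.mem_univ l) (by simp [hl]), zero_mul]
  · intro h
    exact absurd (Fintype.mem_piFinset.mpr fun l => Finset.mem_range.mpr (by simp only []; have := hj l; omega)) h

/-- For each `l` let `μ l` be a measure on `ℝ` with all polynomial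
moments finite, `ψ l` an orthonormal polynomial family for `μ l`, and `Q^{(l)}` a
quadrature rule exact of degree `a l` for `μ l`; set `q l = ⌊a l / 2⌋`.  Then the full
tensor pseudospectral approximation `S` has no internal aliasing: `S(p) = p` for every
`p` in the span of `{Ψ_j : j l ≤ q l for all l}`. -/
theorem full_tensor_pseudospectral_no_internal_aliasing (d : ℕ)
    (μ : Fin d → Measure ℝ)
    (hmom : ∀ l (n : ℕ), Integrable (fun t => t ^ n) (μ l))
    (ψ : Fin d → ℕ → Polynomial ℝ)
    (hdeg : ∀ l m, (ψ l m).natDegree = m)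
    (horth : ∀ l m m',
      ∫ t, (ψ l m).eval t * (ψ l m').eval t ∂(μ l) = if m = m' then 1 else 0)
    (N : Fin d → ℕ) (x w : ∀ l : Fin d, Fin (N l) → ℝ) (a : Fin d → ℕ)
    (hexact : ∀ l : Fin d, ∀ p : Polynomial ℝ, p.natDegree ≤ a l →
      ∑ i, w l i * p.eval (x l i) = ∫ t, p.eval t ∂(μ l)) :
    ∀ p ∈ Submodule.span ℝ
        {g : (Fin d → ℝ) → ℝ | ∃ j : Fin d → ℕ,
          (∀ l, j l ≤ a l / 2) ∧ g = multiPsi ψ j},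
      fullTensorPseudospectral N x w ψ (fun l => a l / 2) p = p := by
  intro p hp
  induction hp using Submodule.span_induction with
  | mem g hg =>
    obtain ⟨j, hj, rfl⟩ := hg
    exact key μ ψ hdeg horth N x w a hexact j hj
  | zero =>
    funext y
    simp [fullTensorPseudospectral, tensorQuad]
  | add f g _ _ hf hg =>
    funext y
    have := congrFun hf y
    have := congrFun hg y
    simp only [fullTensorPseudospectral, tensorQuad, Pi.add_apply, add_mul, mul_add,
      Finset.sum_add_distrib] at *
    linarith [congrFun hf y, congrFun hg y]
  | smul c f _ hf =>
    funext y
    have h := congrFun hf y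
    simp only [fullTensorPseudospectral, tensorQuad, Pi.smul_apply, smul_eq_mul] at *
    calc ∑ j ∈ Fintype.piFinset (fun l => Finset.range (a l / 2 + 1)),
          (∑ i : ∀ l, Fin (N l), (∏ l, w l (i l)) * (c * f (fun l => x l (i l)) * multiPsi ψ j (fun l => x l (i l)))) * multiPsi ψ j y
        = c * ∑ j ∈ Fintype.piFinset (fun l => Finset.range (a l / 2 + 1)),
          (∑ i : ∀ l, Fin (N l), (∏ l, w l (i l)) * (f (fun l => x l (i l)) * multiPsi ψ j (fun l => x l (i l)))) * multiPsi ψ j y := by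
          rw [Finset.mul_sum]
          refine Finset.sum_congr rfl fun j _ => ?_
          rw [← mul_assoc, Finset.mul_sum]
          congr 1
          refine Finset.sum_congr rfl fun i _ => by ring
      _ = c * f y := by rw [h]
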